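/- Let A ∈ ℝ^{m×n}, let Ω ∈ ℝ^{n×l} be such that A Ω = Q R is a reduced QR factorization with Q ∈ ℝ^{m×l} having orthonormal columns. Then for any matrix F ∈ ℝ^{l×n}, ‖A − QQᵀA‖₂ ≤ 2‖AΩF − A‖₂. -/

import Mathlib

open Matrix BigOperators

theorem Matrix.isHermitian_transpose_mul_self {m n : Type*} [Fintype m]
    (A : Matrix m n ℝ) : (Aᵀ * A).IsHermitian := by
  simpa [conjTranspose_eq_transpose_of_trivial] using isHermitian_conjTranspose_mul_self A

noncomputable def singularValue {m n : ℕ} (A : Matrix (Fin m) (Fin n) ℝ) : Fin n → ℝ :=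
  fun j =>
    Real.sqrt ((Matrix.isHermitian_transpose_mul_self A).eigenvalues
      (Tuple.sort (fun i => -(Matrix.isHermitian_transpose_mul_self A).eigenvalues i) j))

noncomputable def matSpectralNorm {m n : ℕ} (A : Matrix (Fin m) (Fin n) ℝ) : ℝ :=
  ‖LinearMap.toContinuousLinearMap (Matrix.toEuclideanLin A)‖

noncomputable def frobNorm {m n : ℕ} (A : Matrix (Fin m) (Fin n) ℝ) : ℝ :=
  Real.sqrt (∑ i, ∑ j, (A i j)^2)

noncomputable def pinv {a b : ℕ} (W : Matrix (Fin a) (Fin b) ℝ) : Matrix (Fin b) (Fin a) ℝ :=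
  if a ≤ b then Wᵀ * (W * Wᵀ)⁻¹ else (Wᵀ * W)⁻¹ * Wᵀ

/-! With `P = Q Qᵀ` and `X = AΩF - A`, the relation `P (AΩ) = AΩ` gives `A - P A = P X - X`.
The C*-identity `‖Q‖² = ‖Qᵀ Q‖ = ‖1‖ ≤ 1` makes `P` a contraction, so the triangle inequality
bounds the right-hand side by `2 ‖X‖`. -/

open scoped Matrix.Norms.L2Operator

theorem matSpectralNorm_eq_l2_opNorm {m n : ℕ} (A : Matrix (Fin m) (Fin n) ℝ) :
    matSpectralNorm A = ‖A‖ :=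
  rfl

namespace Matrix

theorem sub_mul_eq_mul_sub_sub_of_mul_eq {α : Type*} [CommRing α] {m n k : Type*} [Fintype m]
    [Fintype k] {P : Matrix m m α} {B : Matrix m k α} (hPB : P * B = B) (A : Matrix m n α)
    (F : Matrix k n α) : A - P * A = P * (B * F - A) - (B * F - A) := by
  rw [Matrix.mul_sub, ← Matrix.mul_assoc, hPB]
  abel

variable {𝕜 : Type*} [RCLike 𝕜] {m n k : Type*} [Fintype m] [Fintype n] [DecidableEq n]

theorem l2_opNorm_le_one_of_conjTranspose_mul_self_eq_one {Q : Matrix m n 𝕜} (hQ : Qᴴ * Q = 1) :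
    ‖Q‖ ≤ 1 := by
  have hone : ‖(1 : Matrix n n 𝕜)‖ = ‖(1 : Matrix n n 𝕜)‖ * ‖(1 : Matrix n n 𝕜)‖ := by
    simpa using l2_opNorm_conjTranspose_mul_self (1 : Matrix n n 𝕜)
  have hone_le : ‖(1 : Matrix n n 𝕜)‖ ≤ 1 := by nlinarith [norm_nonneg (1 : Matrix n n 𝕜)]
  have hQQ : ‖Q‖ * ‖Q‖ = ‖(1 : Matrix n n 𝕜)‖ := by
    rw [← l2_opNorm_conjTranspose_mul_self, hQ]
  nlinarith [norm_nonneg Q]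

theorem l2_opNorm_mul_conjTranspose_mul_le [DecidableEq m] [Fintype k] [DecidableEq k]
    {Q : Matrix m n 𝕜} (hQ : Qᴴ * Q = 1) (X : Matrix m k 𝕜) : ‖Q * Qᴴ * X‖ ≤ ‖X‖ := by
  have hQ_le : ‖Q‖ ≤ 1 := l2_opNorm_le_one_of_conjTranspose_mul_self_eq_one hQ
  have hQH_le : ‖Qᴴ‖ ≤ 1 := by rwa [l2_opNorm_conjTranspose]
  calc ‖Q * Qᴴ * X‖ ≤ ‖Q‖ * ‖Qᴴ‖ * ‖X‖ := by
        refine (l2_opNorm_mul _ _).trans ?_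
        gcongr
        exact l2_opNorm_mul _ _
    _ ≤ 1 * 1 * ‖X‖ := by gcongr
    _ = ‖X‖ := by ring

end Matrix

theorem projection_error_bound_general {m n l : ℕ} (A : Matrix (Fin m) (Fin n) ℝ)
    (Ω : Matrix (Fin n) (Fin l) ℝ) (Q : Matrix (Fin m) (Fin l) ℝ)
    (R : Matrix (Fin l) (Fin l) ℝ)
    (hQ : Qᵀ * Q = 1) (hQR : A * Ω = Q * R)
    (F : Matrix (Fin l) (Fin n) ℝ) :
    matSpectralNorm (A - Q * Qᵀ * A) ≤ 2 * matSpectralNorm (A * Ω * F - A) := by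
  rw [← conjTranspose_eq_transpose_of_trivial] at hQ ⊢
  have hfix : Q * Qᴴ * (A * Ω) = A * Ω := by
    rw [hQR, Matrix.mul_assoc, ← Matrix.mul_assoc Qᴴ, hQ, Matrix.one_mul]
  rw [matSpectralNorm_eq_l2_opNorm, matSpectralNorm_eq_l2_opNorm,
    sub_mul_eq_mul_sub_sub_of_mul_eq hfix]
  calc ‖Q * Qᴴ * (A * Ω * F - A) - (A * Ω * F - A)‖
      ≤ ‖Q * Qᴴ * (A * Ω * F - A)‖ + ‖A * Ω * F - A‖ := norm_sub_le _ _
    _ ≤ ‖A * Ω * F - A‖ + ‖A * Ω * F - A‖ := by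
        gcongr; exact l2_opNorm_mul_conjTranspose_mul_le hQ _
    _ = 2 * ‖A * Ω * F - A‖ := by ring

/-- If AΩ = QR is a reduced QR factorization, then for any F,
‖A − QQᵀA‖₂ ≤ 2‖AΩF − A‖₂. -/
theorem projection_error_bound {m n l : ℕ} (A : Matrix (Fin m) (Fin n) ℝ)
    (Ω : Matrix (Fin n) (Fin l) ℝ) (Q : Matrix (Fin m) (Fin l) ℝ)
    (R : Matrix (Fin l) (Fin l) ℝ)
    (hQ : Qᵀ * Q = 1) (hQR : A * Ω = Q * R) (hR : ∀ i j : Fin l, j < i → R i j = 0)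
    (F : Matrix (Fin l) (Fin n) ℝ) :
    matSpectralNorm (A - Q * Qᵀ * A) ≤ 2 * matSpectralNorm (A * Ω * F - A) :=
  projection_error_bound_general A Ω Q R hQ hQR F
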